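/- arXiv:1507.02834 — 2 statements merged into one kernel-verified Lean document; each statement's English description precedes it below -/
import Mathlib

section
/- Let n be a positive integer divisible by an odd prime p, let r = v_p(n), and suppose n - k = ℓ(p-1) for a nonnegative integer ℓ. Then c(n, k) ≡ (-1)^ℓ · C(n/p, ℓ) (mod p^r). -/
open Polynomial

/-- `P n = ∏_{k=0}^{n-1} (1 + k·t)` in `ℤ[t]`. -/
noncomputable def P (n : ℕ) : Polynomial ℤ :=
  ∏ k ∈ Finset.range n, (1 + Polynomial.C (k : ℤ) * Polynomial.X)

/-- Unsigned Stirling number of the first kind: coefficient of `t^{n-k}` in `P n`. -/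
noncomputable def stirlingFirst (n k : ℕ) : ℤ := (P n).coeff (n - k)

open Finset

noncomputable def Q (a : ℤ) (m : ℕ) : Polynomial ℤ :=
  ∏ k ∈ Finset.range m, (1 + Polynomial.C (a + (k : ℤ)) * Polynomial.X)

lemma Q_zero (m : ℕ) : Q 0 m = P m := by simp [Q, P]

lemma Q_succ (a : ℤ) (m : ℕ) : Q a (m+1) = Q a m * (1 + C (a + (m:ℤ)) * X) :=
  Finset.prod_range_succ _ _

lemma shiftQ (m : ℕ) (x y : ℤ) : C (x - y) ∣ Q x m - Q y m := by
  induction m with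
  | zero => simp [Q]
  | succ m ih =>
    rw [Q_succ, Q_succ]
    have hkey : Q x m * (1 + C (x + (m:ℤ)) * X) - Q y m * (1 + C (y + (m:ℤ)) * X)
        = (Q x m - Q y m) * (1 + C (y + (m:ℤ)) * X) + C (x - y) * (Q x m * X) := by
      have : (C (x + (m:ℤ)) : ℤ[X]) = C (y + (m:ℤ)) + C (x - y) := by
        rw [← C_add]; ring_nf
      rw [this]; ring
    rw [hkey]
    exact dvd_add (ih.mul_right _) (dvd_mul_right _ _)

lemma pairQ (m : ℕ) (a b : ℤ) :
    C a * C b ∣ Q a m + Q b m - Q 0 m - Q (a + b) m := by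
  induction m with
  | zero => simp [Q]
  | succ m ih =>
    rw [Q_succ, Q_succ, Q_succ, Q_succ]
    have ha : (C (a + (m:ℤ)) : ℤ[X]) = C ((m:ℤ)) + C a := by rw [← C_add]; ring_nf
    have hb : (C (b + (m:ℤ)) : ℤ[X]) = C ((m:ℤ)) + C b := by rw [← C_add]; ring_nf
    have hab : (C (a + b + (m:ℤ)) : ℤ[X]) = C ((m:ℤ)) + C a + C b := by
      rw [← C_add, ← C_add]; ring_nf
    have h0 : ((0:ℤ) + (m:ℤ)) = (m:ℤ) := by ring
    rw [ha, hb, hab, h0]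
    have hkey : Q a m * (1 + (C ((m:ℤ)) + C a) * X) + Q b m * (1 + (C ((m:ℤ)) + C b) * X)
          - Q 0 m * (1 + C ((m:ℤ)) * X) - Q (a+b) m * (1 + (C ((m:ℤ)) + C a + C b) * X)
        = (Q a m + Q b m - Q 0 m - Q (a+b) m) * (1 + C ((m:ℤ)) * X)
          + (C a * X) * (Q a m - Q (a+b) m) + (C b * X) * (Q b m - Q (a+b) m) := by
      ring
    rw [hkey]
    have h1 : C a * C b ∣ (C a * X) * (Q a m - Q (a+b) m) := by
      have : C (a - (a+b)) ∣ Q a m - Q (a+b) m := shiftQ m a (a+b)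
      have hb' : C b ∣ Q a m - Q (a+b) m := by
        have : C (-b) ∣ Q a m - Q (a+b) m := by simpa using this
        simpa [dvd_neg] using (neg_dvd.mp (by simpa [map_neg] using this))
      obtain ⟨d, hd⟩ := hb'
      exact ⟨X * d, by rw [hd]; ring⟩
    have h2 : C a * C b ∣ (C b * X) * (Q b m - Q (a+b) m) := by
      have : C (b - (a+b)) ∣ Q b m - Q (a+b) m := shiftQ m b (a+b)
      have ha' : C a ∣ Q b m - Q (a+b) m := by
        have : C (-a) ∣ Q b m - Q (a+b) m := by simpa using this
        simpa [dvd_neg] using (neg_dvd.mp (by simpa [map_neg] using this))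
      obtain ⟨d, hd⟩ := ha'
      exact ⟨X * d, by rw [hd]; ring⟩
    exact dvd_add (dvd_add (ih.mul_right _) h1) h2

section Generic
variable {R : Type*} [CommRing R] {ι : Type*}

lemma prodCongr (s : Finset ι) (x : ι → R) (y c : R) (h : ∀ i ∈ s, c ∣ x i - y) :
    c ∣ (∏ i ∈ s, x i) - y ^ s.card := by
  classical
  induction s using Finset.induction_on with
  | empty => simp
  | @insert a s ha ih =>
    rw [Finset.prod_insert ha, Finset.card_insert_of_notMem ha]
    have key : x a * ∏ i ∈ s, x i - y ^ (s.card + 1)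
        = (x a - y) * ∏ i ∈ s, x i + y * ((∏ i ∈ s, x i) - y ^ s.card) := by ring
    rw [key]
    exact dvd_add ((h a (mem_insert_self a s)).mul_right _)
      ((ih fun i hi => h i (mem_insert_of_mem hi)).mul_left _)

lemma blockApprox (s : Finset ι) (x : ι → R) (y c : R) (h : ∀ i ∈ s, c ∣ x i - y) :
    c ^ 2 ∣ (∏ i ∈ s, x i) - (y ^ s.card + y ^ (s.card - 1) * ∑ i ∈ s, (x i - y)) := by
  classical
  induction s using Finset.induction_on with
  | empty => simp
  | @insert a s ha ih =>
    rw [Finset.prod_insert ha, Finset.card_insert_of_notMem ha, Finset.sum_insert ha]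
    obtain ⟨u, hu⟩ := ih fun i hi => h i (mem_insert_of_mem hi)
    obtain ⟨da, hda⟩ := h a (mem_insert_self a s)
    have hsum : c ∣ ∑ i ∈ s, (x i - y) := Finset.dvd_sum fun i hi => h i (mem_insert_of_mem hi)
    obtain ⟨ds, hds⟩ := hsum
    have hxa : x a = y + c * da := by linear_combination hda
    have hprod : ∏ i ∈ s, x i = y ^ s.card + y ^ (s.card - 1) * ∑ i ∈ s, (x i - y) + c ^ 2 * u := by
      linear_combination hu
    rcases Nat.eq_zero_or_pos s.card with hc | hc
    · have hs : s = ∅ := Finset.card_eq_zero.mp hc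
      subst hs
      simp [hxa]
    · have e1 : s.card + 1 - 1 = s.card := by omega
      have e2 : y ^ s.card = y ^ (s.card - 1) * y := by rw [← pow_succ]; congr 1; omega
      refine ⟨(da * ds) * y ^ (s.card - 1) + (y + c * da) * u, ?_⟩
      rw [e1, hprod, hds, hxa, pow_succ, e2]
      linear_combination (-y) * e2

lemma powp_step (p r : ℕ) (hr : 1 ≤ r) (x y : R) (h : (p : R) ^ r ∣ x - y) :
    (p : R) ^ (r + 1) ∣ x ^ p - y ^ p := by
  have h1 : (p : R) ∣ x - y := (dvd_pow_self (p:R) (by omega : r ≠ 0)).trans h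
  have hgeom : (∑ i ∈ range p, x ^ i * y ^ (p - 1 - i)) * (x - y) = x ^ p - y ^ p :=
    geom_sum₂_mul x y p
  have hS : (p : R) ∣ ∑ i ∈ range p, x ^ i * y ^ (p - 1 - i) := by
    have hdiff : (∑ i ∈ range p, x ^ i * y ^ (p - 1 - i)) - (p : R) * y ^ (p - 1)
        = ∑ i ∈ range p, (x ^ i - y ^ i) * y ^ (p - 1 - i) := by
      have : ∀ i ∈ range p, (x ^ i - y ^ i) * y ^ (p - 1 - i)
          = x ^ i * y ^ (p - 1 - i) - y ^ (p - 1) := by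
        intro i hi
        rw [mem_range] at hi
        have : y ^ i * y ^ (p - 1 - i) = y ^ (p - 1) := by
          rw [← pow_add]; congr 1; omega
        rw [sub_mul, this]
      rw [Finset.sum_congr rfl this, Finset.sum_sub_distrib, Finset.sum_const, card_range,
        nsmul_eq_mul]
    have h2 : (p : R) ∣ (∑ i ∈ range p, x ^ i * y ^ (p - 1 - i)) - (p : R) * y ^ (p - 1) := by
      rw [hdiff]
      refine Finset.dvd_sum fun i _ => ?_
      exact (h1.trans (sub_dvd_pow_sub_pow x y i)).mul_right _
    have := dvd_add h2 (Dvd.intro _ rfl : (p:R) ∣ (p : R) * y ^ (p - 1))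
    simpa using this
  calc (p : R) ^ (r + 1) = (p : R) * (p : R) ^ r := by ring
  _ ∣ (∑ i ∈ range p, x ^ i * y ^ (p - 1 - i)) * (x - y) := mul_dvd_mul hS h
  _ = x ^ p - y ^ p := hgeom

lemma prod_blocks (f : ℕ → R) (a m : ℕ) :
    ∏ k ∈ range (a * m), f k = ∏ b ∈ range a, ∏ j ∈ range m, f (b * m + j) := by
  induction a with
  | zero => simp
  | succ a ih =>
    rw [Nat.succ_mul, Finset.prod_range_add, ih, Finset.prod_range_succ]

end Generic

section Base
open Polynomial
variable (p : ℕ) [Fact p.Prime]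

lemma prod_X_sub_C_univ :
    ∏ a : ZMod p, (X - C a) = X ^ p - X := by
  have hp : (1:ℕ) < p := (Fact.out : p.Prime).one_lt
  have hcard : Fintype.card (ZMod p) = p := ZMod.card p
  have hroots : ((X ^ p - X : (ZMod p)[X]).roots) = Finset.univ.val := by
    have := FiniteField.roots_X_pow_card_sub_X (ZMod p)
    rwa [hcard] at this
  have hdeg : (X ^ p - X : (ZMod p)[X]).natDegree = p := by
    have := FiniteField.X_pow_card_sub_X_natDegree_eq (ZMod p) hp
    exact this
  have hmonic : (X ^ p - X : (ZMod p)[X]).Monic :=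
    Polynomial.monic_X_pow_sub (by rw [degree_X]; exact_mod_cast hp)
  have := prod_multiset_X_sub_C_of_monic_of_roots_card_eq hmonic
    (by rw [hroots, hdeg]; simpa using hcard)
  rw [hroots] at this
  rw [← this]
  rfl

lemma prod_X_sub_C_erase :
    ∏ a ∈ (Finset.univ.erase (0 : ZMod p)), (X - C a) = X ^ (p - 1) - 1 := by
  have hp : (1:ℕ) < p := (Fact.out : p.Prime).one_lt
  have h1 : (X - C (0 : ZMod p)) * ∏ a ∈ (Finset.univ.erase (0 : ZMod p)), (X - C a)
      = X ^ p - X := by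
    rw [← prod_X_sub_C_univ p,
      ← Finset.mul_prod_erase Finset.univ (fun a => (X : (ZMod p)[X]) - C a)
        (Finset.mem_univ (0 : ZMod p))]
  have h2 : (X : (ZMod p)[X]) * (X ^ (p - 1) - 1) = X ^ p - X := by
    have : (X : (ZMod p)[X]) * X ^ (p - 1) = X ^ p := by
      rw [← pow_succ']; congr 1; omega
    rw [mul_sub, this, mul_one]
  have hX : (X : (ZMod p)[X]) ≠ 0 := X_ne_zero
  apply mul_left_cancel₀ hX
  rw [h2, ← h1]
  simp

lemma prod_one_add_erase :
    ∏ a ∈ (Finset.univ.erase (0 : ZMod p)), (1 + C a * X) = 1 - X ^ (p - 1) := by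
  have hfac : ∀ a ∈ Finset.univ.erase (0 : ZMod p),
      (1 + C a * X : (ZMod p)[X]) = C a * (X - C (-a⁻¹)) := by
    intro a ha
    have ha0 : a ≠ 0 := Finset.ne_of_mem_erase ha
    rw [mul_sub, ← C_mul, mul_neg, mul_inv_cancel₀ ha0]
    ring_nf
    simp [map_neg]
    ring
  rw [Finset.prod_congr rfl hfac, Finset.prod_mul_distrib]
  have h1 : ∏ a ∈ Finset.univ.erase (0 : ZMod p), (C a : (ZMod p)[X]) = C (-1) := by
    rw [← map_prod]
    congr 1
    -- ∏ a in erase univ 0, a = -1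
    have := ZMod.prod_Ico_one_prime (p := p)
    rw [← this]
    refine Finset.prod_nbij' (fun a => ZMod.val a) (fun k => (k : ZMod p)) ?_ ?_ ?_ ?_ ?_
    · intro a ha
      have ha0 : a ≠ 0 := Finset.ne_of_mem_erase ha
      rw [Finset.mem_Ico]
      refine ⟨?_, ZMod.val_lt a⟩
      by_contra h
      push_neg at h
      interval_cases h' : a.val
      · exact ha0 ((ZMod.val_eq_zero a).mp h')
    · intro k hk
      rw [Finset.mem_Ico] at hk
      refine Finset.mem_erase.mpr ⟨?_, Finset.mem_univ _⟩
      intro h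
      have h' : ((k : ZMod p)) = 0 := h
      have := ZMod.val_cast_of_lt hk.2
      rw [h', ZMod.val_zero] at this
      omega
    · intro a _
      exact ZMod.natCast_rightInverse a
    · intro k hk
      rw [Finset.mem_Ico] at hk
      exact ZMod.val_cast_of_lt hk.2
    · intro a _
      exact (ZMod.natCast_rightInverse a).symm
  have h2 : ∏ a ∈ Finset.univ.erase (0 : ZMod p), (X - C (-a⁻¹) : (ZMod p)[X])
      = ∏ b ∈ Finset.univ.erase (0 : ZMod p), (X - C b : (ZMod p)[X]) := by
    refine Finset.prod_nbij' (fun a => -a⁻¹) (fun b => (-b)⁻¹) ?_ ?_ ?_ ?_ ?_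
    · intro a ha
      have ha0 : a ≠ 0 := Finset.ne_of_mem_erase ha
      exact Finset.mem_erase.mpr ⟨neg_ne_zero.mpr (inv_ne_zero ha0), Finset.mem_univ _⟩
    · intro b hb
      have hb0 : b ≠ 0 := Finset.ne_of_mem_erase hb
      exact Finset.mem_erase.mpr ⟨inv_ne_zero (neg_ne_zero.mpr hb0), Finset.mem_univ _⟩
    · intro a _; simp
    · intro b _; simp
    · intro a _; rfl
  rw [h1, h2, prod_X_sub_C_erase]
  simp [map_neg]

lemma intPoly_dvd_of_map_eq_zero (q : ℕ) (f : ℤ[X])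
    (h : f.map (Int.castRingHom (ZMod q)) = 0) : ((q : ℤ[X])) ∣ f := by
  have hC : C ((q : ℤ)) ∣ f := by
    rw [C_dvd_iff_dvd_coeff]
    intro i
    have hc : ((f.coeff i : ℤ) : ZMod q) = 0 := by
      have := congrArg (fun g => Polynomial.coeff g i) h
      simpa [Polynomial.coeff_map] using this
    exact (ZMod.intCast_zmod_eq_zero_iff_dvd _ _).mp hc
  simpa using hC

lemma map_P_p : (P p).map (Int.castRingHom (ZMod p)) = 1 - X ^ (p - 1) := by
  rw [P, Polynomial.map_prod]
  have hfac : ∀ k ∈ Finset.range p,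
      ((1 + C (k : ℤ) * X : ℤ[X]).map (Int.castRingHom (ZMod p))) = 1 + C ((k : ZMod p)) * X := by
    intro k _
    simp [Polynomial.map_add, Polynomial.map_mul, Polynomial.map_C, Polynomial.map_X]
  rw [Finset.prod_congr rfl hfac]
  have hbij : ∏ k ∈ Finset.range p, (1 + C ((k : ZMod p)) * X)
      = ∏ a : ZMod p, (1 + C a * X) := by
    refine Finset.prod_nbij' (fun k => ((k : ZMod p))) (fun a => a.val) ?_ ?_ ?_ ?_ ?_
    · intro k _; exact Finset.mem_univ _
    · intro a _; exact Finset.mem_range.mpr (ZMod.val_lt a)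
    · intro k hk; exact ZMod.val_cast_of_lt (Finset.mem_range.mp hk)
    · intro a _; exact ZMod.natCast_rightInverse a
    · intro k _; rfl
  rw [hbij, ← Finset.mul_prod_erase Finset.univ _ (Finset.mem_univ (0 : ZMod p)),
    prod_one_add_erase]
  simp

lemma base_dvd : ((p : ℤ[X])) ∣ P p - (1 - X ^ (p - 1)) := by
  apply intPoly_dvd_of_map_eq_zero
  rw [Polynomial.map_sub, map_P_p, Polynomial.map_sub, Polynomial.map_one, Polynomial.map_pow,
    Polynomial.map_X, sub_self]

end Base

section Main
open Polynomial Finset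

variable (p : ℕ) [Fact p.Prime]

lemma cast_pow_eq_C (s : ℕ) : ((p : ℤ[X])) ^ s = C ((p : ℤ) ^ s) := by
  have h : (C ((p : ℤ)) : ℤ[X]) = (p : ℤ[X]) := by simp
  rw [map_pow, h]

lemma QG_dvd (s r : ℕ) (b : ℕ) :
    ((p : ℤ[X])) ^ r ∣ Q ((b * p ^ r : ℕ) : ℤ) (s) - P s := by
  have h1 : C (((b * p ^ r : ℕ) : ℤ) - 0) ∣ Q ((b * p ^ r : ℕ) : ℤ) s - Q 0 s :=
    shiftQ s _ 0
  rw [Q_zero] at h1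
  have h2 : ((p : ℤ) ^ r) ∣ ((b * p ^ r : ℕ) : ℤ) - 0 := ⟨b, by push_cast; ring⟩
  rw [cast_pow_eq_C]
  exact (map_dvd C h2).trans h1

lemma mainDvd (hodd : Odd p) (r : ℕ) (hr : 1 ≤ r) :
    ((p : ℤ[X])) ^ r ∣ P (p ^ r) - (1 - X ^ (p - 1)) ^ (p ^ (r - 1)) := by
  induction r, hr using Nat.le_induction with
  | base => simpa using base_dvd p
  | succ r hr ih =>
    set G : ℤ[X] := P (p ^ r) with hG
    set T : ℤ[X] := 1 - X ^ (p - 1) with hT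
    -- Step 1: split the product into blocks
    have hsplit : P (p ^ (r + 1)) = ∏ b ∈ range p, Q ((b * p ^ r : ℕ) : ℤ) (p ^ r) := by
      rw [P, show p ^ (r + 1) = p * p ^ r from by rw [pow_succ]; ring,
        prod_blocks (fun k => 1 + C (k : ℤ) * X) p (p ^ r)]
      refine Finset.prod_congr rfl fun b _ => ?_
      rw [Q]
      refine Finset.prod_congr rfl fun j _ => ?_
      push_cast
      ring
    have hQG : ∀ b ∈ range p, ((p : ℤ[X])) ^ r ∣ Q ((b * p ^ r : ℕ) : ℤ) (p ^ r) - G :=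
      fun b _ => QG_dvd p (p ^ r) r b
    -- Step 3: the sum is divisible by p^(r+1)
    set SS : ℤ[X] := ∑ b ∈ range p, (Q ((b * p ^ r : ℕ) : ℤ) (p ^ r) - G) with hSS
    have hrefl : SS = ∑ b ∈ range p, (Q (((p - 1 - b) * p ^ r : ℕ) : ℤ) (p ^ r) - G) := by
      rw [hSS]
      exact (Finset.sum_range_reflect (fun b => Q ((b * p ^ r : ℕ) : ℤ) (p ^ r) - G) p).symm
    have h2S : (2 : ℤ[X]) * SS
        = ∑ b ∈ range p, ((Q ((b * p ^ r : ℕ) : ℤ) (p ^ r) - G)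
            + (Q (((p - 1 - b) * p ^ r : ℕ) : ℤ) (p ^ r) - G)) := by
      rw [Finset.sum_add_distrib, two_mul]
      nth_rw 2 [hrefl]
    have hpair : ∀ b ∈ range p, ((p : ℤ[X])) ^ (r + 1) ∣
        ((Q ((b * p ^ r : ℕ) : ℤ) (p ^ r) - G)
          + (Q (((p - 1 - b) * p ^ r : ℕ) : ℤ) (p ^ r) - G))
          - (Q (((p - 1) * p ^ r : ℕ) : ℤ) (p ^ r) - G) := by
      intro b hb
      have hbp : b < p := Finset.mem_range.mp hb
      have hadd : ((b * p ^ r : ℕ) : ℤ) + (((p - 1 - b) * p ^ r : ℕ) : ℤ)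
          = (((p - 1) * p ^ r : ℕ) : ℤ) := by
        have : b * p ^ r + (p - 1 - b) * p ^ r = (p - 1) * p ^ r := by
          have hb1 : b + (p - 1 - b) = p - 1 := by omega
          rw [← Nat.add_mul, hb1]
        exact_mod_cast congrArg (fun x : ℕ => (x : ℤ)) this
      have hpq := pairQ (p ^ r) ((b * p ^ r : ℕ) : ℤ) (((p - 1 - b) * p ^ r : ℕ) : ℤ)
      rw [hadd, Q_zero] at hpq
      have hdd : ((p : ℤ) ^ (2 * r)) ∣
          ((b * p ^ r : ℕ) : ℤ) * (((p - 1 - b) * p ^ r : ℕ) : ℤ) :=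
        ⟨(b * (p - 1 - b) : ℕ), by push_cast; ring⟩
      have h2r : ((p : ℤ[X])) ^ (2 * r) ∣
          ((Q ((b * p ^ r : ℕ) : ℤ) (p ^ r) + Q (((p - 1 - b) * p ^ r : ℕ) : ℤ) (p ^ r)
            - G - Q (((p - 1) * p ^ r : ℕ) : ℤ) (p ^ r))) := by
        rw [cast_pow_eq_C]
        refine (map_dvd C hdd).trans ?_
        rw [map_mul]
        exact hpq
      have := (pow_dvd_pow ((p : ℤ[X])) (by omega : r + 1 ≤ 2 * r)).trans h2r
      have heq : ((Q ((b * p ^ r : ℕ) : ℤ) (p ^ r) - G)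
            + (Q (((p - 1 - b) * p ^ r : ℕ) : ℤ) (p ^ r) - G))
            - (Q (((p - 1) * p ^ r : ℕ) : ℤ) (p ^ r) - G)
          = Q ((b * p ^ r : ℕ) : ℤ) (p ^ r) + Q (((p - 1 - b) * p ^ r : ℕ) : ℤ) (p ^ r)
            - G - Q (((p - 1) * p ^ r : ℕ) : ℤ) (p ^ r) := by ring
      rwa [heq]
    have h2dvd : ((p : ℤ[X])) ^ (r + 1) ∣ (2 : ℤ[X]) * SS := by
      rw [h2S]
      have hsum : ∑ b ∈ range p, ((Q ((b * p ^ r : ℕ) : ℤ) (p ^ r) - G)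
            + (Q (((p - 1 - b) * p ^ r : ℕ) : ℤ) (p ^ r) - G))
          = (∑ b ∈ range p, (((Q ((b * p ^ r : ℕ) : ℤ) (p ^ r) - G)
            + (Q (((p - 1 - b) * p ^ r : ℕ) : ℤ) (p ^ r) - G))
            - (Q (((p - 1) * p ^ r : ℕ) : ℤ) (p ^ r) - G)))
            + p • (Q (((p - 1) * p ^ r : ℕ) : ℤ) (p ^ r) - G) := by
        rw [Finset.sum_sub_distrib, Finset.sum_const, card_range]
        ring
      rw [hsum]
      refine dvd_add (Finset.dvd_sum hpair) ?_
      rw [nsmul_eq_mul, pow_succ']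
      exact mul_dvd_mul (by norm_cast) (QG_dvd p (p ^ r) r (p - 1))
    have hSdvd : ((p : ℤ[X])) ^ (r + 1) ∣ SS := by
      rw [cast_pow_eq_C] at h2dvd ⊢
      rw [C_dvd_iff_dvd_coeff] at h2dvd ⊢
      intro i
      have h2i := h2dvd i
      have hco : IsCoprime ((p : ℤ) ^ (r + 1)) 2 := by
        refine IsCoprime.pow_left ?_
        rw [show ((2 : ℤ)) = ((2 : ℕ) : ℤ) by norm_num]
        rw [Nat.isCoprime_iff_coprime]
        refine (Nat.coprime_primes (Fact.out : p.Prime) Nat.prime_two).mpr ?_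
        rintro rfl
        exact (by decide : ¬ Odd 2) hodd
      have h2c : (2 : ℤ[X]) * SS = C 2 * SS := by norm_num
      rw [h2c, coeff_C_mul] at h2i
      exact hco.dvd_of_dvd_mul_left h2i
    -- Step 4: block approximation
    have hblock := blockApprox (range p) (fun b => Q ((b * p ^ r : ℕ) : ℤ) (p ^ r)) G
      (((p : ℤ[X])) ^ r) hQG
    rw [card_range] at hblock
    have hblock2 : ((p : ℤ[X])) ^ (r + 1) ∣ P (p ^ (r + 1)) - G ^ p := by
      have hc2 : (((p : ℤ[X])) ^ r) ^ 2 = ((p : ℤ[X])) ^ (2 * r) := by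
        rw [← pow_mul]; ring_nf
      have hdecomp : P (p ^ (r + 1)) - G ^ p
          = ((∏ b ∈ range p, Q ((b * p ^ r : ℕ) : ℤ) (p ^ r))
              - (G ^ p + G ^ (p - 1) * SS)) + G ^ (p - 1) * SS := by
        rw [hsplit]; ring
      rw [hdecomp]
      refine dvd_add ?_ (hSdvd.mul_left _)
      refine (pow_dvd_pow ((p : ℤ[X])) (by omega : r + 1 ≤ 2 * r)).trans ?_
      rw [← hc2]
      exact hblock
    -- Step 5: power step
    have hpow := powp_step p r hr G (T ^ (p ^ (r - 1))) ih
    have hTp : (T ^ (p ^ (r - 1))) ^ p = T ^ (p ^ r) := by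
      rw [← pow_mul]
      congr 1
      rw [← pow_succ]
      congr 1
      omega
    rw [hTp] at hpow
    -- combine
    have hfinal : P (p ^ (r + 1)) - T ^ (p ^ (r + 1 - 1))
        = (P (p ^ (r + 1)) - G ^ p) + (G ^ p - T ^ (p ^ r)) := by
      have : r + 1 - 1 = r := by omega
      rw [this]; ring
    rw [hfinal]
    exact dvd_add hblock2 hpow

end Main

section Final
open Polynomial Finset

lemma coeff_one_sub_pow (q m ℓ : ℕ) (hq : 0 < q) :
    ((1 - X ^ q : ℤ[X]) ^ m).coeff (ℓ * q) = (-1) ^ ℓ * (Nat.choose m ℓ : ℤ) := by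
  have hexp : (1 - X ^ q : ℤ[X]) ^ m
      = ∑ j ∈ Finset.range (m + 1),
          C ((-1 : ℤ) ^ j * (Nat.choose m j : ℤ)) * X ^ (q * j) := by
    have h1 : (1 - X ^ q : ℤ[X]) ^ m = ((-X ^ q) + 1) ^ m := by ring
    rw [h1, add_pow]
    refine Finset.sum_congr rfl fun j hj => ?_
    have h2 : ((Nat.choose m j : ℕ) : ℤ[X]) = C ((Nat.choose m j : ℤ)) := by
      simp
    rw [one_pow, mul_one, h2, neg_pow, ← pow_mul]
    have h3 : ((-1 : ℤ[X])) ^ j = C ((-1 : ℤ) ^ j) := by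
      simp
    rw [h3, C_mul]
    ring
  rw [hexp, finset_sum_coeff]
  simp only [coeff_C_mul, coeff_X_pow]
  by_cases hl : ℓ ≤ m
  · rw [Finset.sum_eq_single ℓ]
    · simp [mul_comm ℓ q]
    · intro j hj hne
      have hne' : ¬ (ℓ * q = q * j) := by
        intro h
        exact hne (Nat.eq_of_mul_eq_mul_left hq (h.symm.trans (mul_comm ℓ q)))
      simp [hne']
    · intro h
      exact absurd (Finset.mem_range.mpr (by omega)) h
  · rw [Finset.sum_eq_zero, Nat.choose_eq_zero_of_lt (by omega), Nat.cast_zero, mul_zero]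
    intro j hj
    have hne' : ¬ (ℓ * q = q * j) := by
      intro h
      have hj' : j < m + 1 := Finset.mem_range.mp hj
      have : j = ℓ := Nat.eq_of_mul_eq_mul_left hq (h.symm.trans (mul_comm ℓ q))
      omega
    simp [hne']

theorem stmt_5 (p : ℕ) (hp : p.Prime) (hodd : Odd p) (n : ℕ) (hn : 0 < n) (hpn : p ∣ n)
    (r : ℕ) (hr : r = padicValNat p n) (k ℓ : ℕ) (hk : k ≤ n) (hℓ : n - k = ℓ * (p - 1)) :
    stirlingFirst n k ≡ (-1)^ℓ * (Nat.choose (n / p) ℓ : ℤ) [ZMOD (p : ℤ)^r] := by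
  haveI : Fact p.Prime := ⟨hp⟩
  subst hr
  set r := padicValNat p n with hrdef
  have hr1 : 1 ≤ r := one_le_padicValNat_of_dvd hn.ne' hpn
  have hq : p ^ r ∣ n := pow_padicValNat_dvd
  obtain ⟨m', hm'⟩ := hq
  have hsplit : P n = ∏ b ∈ range m', Q ((b * p ^ r : ℕ) : ℤ) (p ^ r) := by
    rw [P, hm', mul_comm (p ^ r) m', prod_blocks]
    refine Finset.prod_congr rfl fun b _ => ?_
    rw [Q]
    refine Finset.prod_congr rfl fun j _ => ?_
    push_cast
    ring
  have hcong1 : ((p : ℤ[X])) ^ r ∣ P n - (P (p ^ r)) ^ m' := by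
    rw [hsplit]
    have := prodCongr (range m') (fun b => Q ((b * p ^ r : ℕ) : ℤ) (p ^ r)) (P (p ^ r))
      (((p : ℤ[X])) ^ r) (fun b _ => QG_dvd p (p ^ r) r b)
    rwa [card_range] at this
  have hcong2 : ((p : ℤ[X])) ^ r ∣ (P (p ^ r)) ^ m'
      - ((1 - X ^ (p - 1) : ℤ[X]) ^ (p ^ (r - 1))) ^ m' :=
    (mainDvd p hodd r hr1).trans (sub_dvd_pow_sub_pow _ _ m')
  have hexp : ((1 - X ^ (p - 1) : ℤ[X]) ^ (p ^ (r - 1))) ^ m'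
      = (1 - X ^ (p - 1)) ^ (n / p) := by
    rw [← pow_mul]
    congr 1
    have hpr : p ^ r = p * p ^ (r - 1) := by
      rw [← pow_succ']
      congr 1
      omega
    have : n = p * (p ^ (r - 1) * m') := by rw [hm', hpr]; ring
    rw [this, Nat.mul_div_cancel_left _ hp.pos]
  have htot : ((p : ℤ[X])) ^ r ∣ P n - (1 - X ^ (p - 1)) ^ (n / p) := by
    have h := dvd_add hcong1 hcong2
    rw [hexp] at h
    have he : P n - (P (p ^ r)) ^ m'
        + ((P (p ^ r)) ^ m' - (1 - X ^ (p - 1)) ^ (n / p))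
        = P n - (1 - X ^ (p - 1)) ^ (n / p) := by ring
    rwa [he] at h
  have hcoeff : ((p : ℤ) ^ r) ∣ (P n).coeff (n - k)
      - ((1 - X ^ (p - 1) : ℤ[X]) ^ (n / p)).coeff (n - k) := by
    rw [cast_pow_eq_C, C_dvd_iff_dvd_coeff] at htot
    simpa [coeff_sub] using htot (n - k)
  rw [hℓ, coeff_one_sub_pow (p - 1) (n / p) ℓ (by have := hp.two_le; omega)] at hcoeff
  have hs : stirlingFirst n k = (P n).coeff (ℓ * (p - 1)) := by
    rw [stirlingFirst, hℓ]
  refine Int.ModEq.symm (Int.modEq_iff_dvd.mpr ?_)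
  rw [hs]
  exact hcoeff


end Final
end

section
/- Let p be an odd prime and r ≥ 1. If k is an integer with 0 ≤ k ≤ p^r such that p - 1 does not divide p^r - k, then v_p(c(p^r, k)) ≥ r. -/
open Polynomial

lemma coeff_comp_C_mul_X {R : Type*} [CommRing R] (q : R[X]) (c : R) (n : ℕ) :
    (q.comp (C c * X)).coeff n = c ^ n * q.coeff n := by
  induction q using Polynomial.induction_on' with
  | add f g hf hg => simp [add_comp, hf, hg, mul_add]
  | monomial i a =>
      simp only [monomial_comp, coeff_monomial]
      rw [mul_pow, ← C_pow, ← mul_assoc, ← C_mul, coeff_C_mul, coeff_X_pow]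
      rcases eq_or_ne i n with h | h
      · simp [h, mul_comm]
      · simp [h, Ne.symm h]

lemma prod_range_cast {n : ℕ} [NeZero n] {M : Type*} [CommMonoid M] (f : ZMod n → M) :
    ∏ k ∈ Finset.range n, f (k : ZMod n) = ∏ x : ZMod n, f x := by
  refine Finset.prod_nbij' (fun k => (k : ZMod n)) (fun x => x.val) ?_ ?_ ?_ ?_ ?_
  · intro a _; exact Finset.mem_univ _
  · intro x _
    simpa [Finset.mem_range] using ZMod.val_lt x
  · intro a ha
    simp [ZMod.val_natCast, Nat.mod_eq_of_lt (Finset.mem_range.mp ha)]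
  · intro x _
    exact ZMod.natCast_rightInverse x
  · intro a _; rfl

theorem stmt_6 (p : ℕ) (hp : p.Prime) (hodd : Odd p) (r : ℕ) (hr : 1 ≤ r)
    (k : ℕ) (hk : k ≤ p^r) (hdvd : ¬ (p - 1) ∣ (p^r - k)) :
    (p : ℤ)^r ∣ stirlingFirst (p^r) k := by
  haveI : Fact p.Prime := ⟨hp⟩
  set n := p ^ r with hn
  haveI : NeZero n := ⟨pow_ne_zero r hp.pos.ne'⟩
  set m := n - k with hm
  -- the mapped polynomial
  set Q : (ZMod n)[X] := ∏ x : ZMod n, (1 + C x * X) with hQ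
  have hmap : (P n).map (Int.castRingHom (ZMod n)) = Q := by
    rw [P, Polynomial.map_prod, hQ, ← prod_range_cast (fun x : ZMod n => 1 + C x * X)]
    apply Finset.prod_congr rfl
    intro i _
    simp
  -- a generator of the units of ZMod p
  obtain ⟨g, hg⟩ := IsCyclic.exists_generator (α := (ZMod p)ˣ)
  have horder : orderOf g = p - 1 := by
    rw [orderOf_eq_card_of_forall_mem_zpowers hg, Nat.card_eq_fintype_card, ZMod.card_units_eq_totient,
      Nat.totient_prime hp]
  set G : ℕ := (g : ZMod p).val with hG
  have hGcast : (G : ZMod p) = (g : ZMod p) := ZMod.natCast_rightInverse _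
  have hpG : ¬ p ∣ G := by
    rw [← ZMod.natCast_eq_zero_iff, hGcast]
    exact g.ne_zero
  have hGunit : IsUnit (G : ZMod n) := by
    rw [ZMod.isUnit_iff_coprime, hn]
    exact Nat.Coprime.pow_right _ (((Nat.Prime.coprime_iff_not_dvd hp).mpr hpG).symm)
  -- Q is invariant under X ↦ G·X
  have hcomp : Q.comp (C (G : ZMod n) * X) = Q := by
    rw [hQ, Polynomial.prod_comp]
    have hfac : ∀ x : ZMod n, (1 + C x * X).comp (C (G : ZMod n) * X)
        = 1 + C (x * (G : ZMod n)) * X := by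
      intro x
      rw [add_comp, one_comp, mul_comp, C_comp, X_comp, ← mul_assoc, ← C_mul]
    rw [Finset.prod_congr rfl fun x _ => hfac x]
    calc ∏ x : ZMod n, (1 + C (x * (G : ZMod n)) * X)
        = ∏ x : ZMod n, (1 + C (x * (hGunit.unit : (ZMod n)ˣ)) * X) := by
          rw [IsUnit.unit_spec]
      _ = ∏ x : ZMod n, (1 + C x * X) :=
          Equiv.prod_comp (Units.mulRight hGunit.unit) (fun x => 1 + C x * X)
  have hkey : ((G : ZMod n) ^ m - 1) * Q.coeff m = 0 := by
    have h1 := congrArg (fun q : (ZMod n)[X] => q.coeff m) hcomp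
    simp only [coeff_comp_C_mul_X] at h1
    rw [sub_mul, one_mul, h1, sub_self]
  have hGpos : 1 ≤ G := Nat.pos_of_ne_zero (fun h0 => hpG (h0 ▸ dvd_zero p))
  have hpow : 1 ≤ G ^ m := Nat.one_le_pow _ _ hGpos
  have hnd : ¬ p ∣ (G ^ m - 1) := by
    intro h
    have h2 : ((G : ZMod p)) ^ m = 1 := by
      have h3 := (ZMod.natCast_eq_zero_iff _ p).mpr h
      rwa [Nat.cast_sub hpow, Nat.cast_pow, Nat.cast_one, sub_eq_zero] at h3
    have hgm : g ^ m = 1 := by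
      ext
      rw [Units.val_pow_eq_pow_val, Units.val_one, ← hGcast]
      exact h2
    have h4 : orderOf g ∣ m := orderOf_dvd_of_pow_eq_one hgm
    rw [horder] at h4
    exact hdvd h4
  have hUnit2 : IsUnit ((G : ZMod n) ^ m - 1) := by
    have hcastsub : ((G ^ m - 1 : ℕ) : ZMod n) = (G : ZMod n) ^ m - 1 := by
      rw [Nat.cast_sub hpow, Nat.cast_pow, Nat.cast_one]
    rw [← hcastsub, ZMod.isUnit_iff_coprime, hn]
    exact Nat.Coprime.pow_right _ (((Nat.Prime.coprime_iff_not_dvd hp).mpr hnd).symm)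
  have hQ0 : Q.coeff m = 0 := (hUnit2.mul_right_eq_zero).mp hkey
  have hz : ((stirlingFirst n k : ℤ) : ZMod n) = 0 := by
    have h5 := congrArg (fun q : (ZMod n)[X] => q.coeff m) hmap
    simp only [coeff_map] at h5
    rw [stirlingFirst, ← hm]
    rw [hQ0] at h5
    exact h5
  have hdvd2 : ((n : ℕ) : ℤ) ∣ stirlingFirst n k :=
    (ZMod.intCast_zmod_eq_zero_iff_dvd _ _).mp hz
  rw [hn] at hdvd2
  push_cast at hdvd2
  exact hdvd2
end
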